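/- arXiv:1708.01330 — 2 statements merged into one kernel-verified Lean document; each statement's English description precedes it below -/
import Mathlib

section
/- Let K be a field, n a positive integer, Λ = K^n = ⨁_{i=1}^n K e_i, and G a group. Every partial action α of G on Λ by K-algebra isomorphisms restricts to a partial action on the finite set {e_1, …, e_n}: each ideal S_g equals ⨁_{e∈X_g} K e for a unique subset X_g ⊆ {e_1,…,e_n}, each α_g maps X_{g⁻¹} bijectively onto X_g, and the resulting data (X_g, α_g|_{X_{g⁻¹}}) is a partial action of G on the set {e_1,…,e_n}. Moreover, this restriction map is a bijection between the set of partial actions of G on Λ by K-algebra isomorphisms and the set of partial actions of G on {e_1,…,e_n}. -/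
/-- A partial action of a group `G` on an `R`-algebra `Λ`: a family of ideals
`S g` of `Λ` together with `R`-algebra isomorphisms `θ g : S g⁻¹ → S g`
(encoded as total maps `Λ → Λ`, whose behaviour is constrained only on `S (g⁻¹)`),
such that `S 1 = Λ`, `θ 1 = id`, the preimage under `θ h` of `S h ∩ S (g⁻¹)`
lies in `S ((g*h)⁻¹)`, and `θ g ∘ θ h = θ (g*h)` on that preimage. -/
structure IsPartialAction (R : Type*) (G : Type*) (Λ : Type*)
    [CommRing R] [Group G] [Ring Λ] [Algebra R Λ]
    (S : G → Set Λ) (θ : G → Λ → Λ) : Prop where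
  zero_mem : ∀ g : G, (0 : Λ) ∈ S g
  add_mem : ∀ g : G, ∀ x ∈ S g, ∀ y ∈ S g, x + y ∈ S g
  neg_mem : ∀ g : G, ∀ x ∈ S g, -x ∈ S g
  smul_mem : ∀ (g : G) (r : R), ∀ x ∈ S g, r • x ∈ S g
  mul_mem_left : ∀ (g : G) (a : Λ), ∀ x ∈ S g, a * x ∈ S g
  mul_mem_right : ∀ (g : G) (a : Λ), ∀ x ∈ S g, x * a ∈ S g
  maps_to : ∀ g : G, ∀ x ∈ S (g⁻¹), θ g x ∈ S g
  map_add : ∀ g : G, ∀ x ∈ S (g⁻¹), ∀ y ∈ S (g⁻¹), θ g (x + y) = θ g x + θ g y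
  map_mul : ∀ g : G, ∀ x ∈ S (g⁻¹), ∀ y ∈ S (g⁻¹), θ g (x * y) = θ g x * θ g y
  map_smul : ∀ (g : G) (r : R), ∀ x ∈ S (g⁻¹), θ g (r • x) = r • θ g x
  injOn : ∀ g : G, Set.InjOn (θ g) (S (g⁻¹))
  surjOn : ∀ g : G, Set.SurjOn (θ g) (S (g⁻¹)) (S g)
  S_one : S (1 : G) = Set.univ
  one_act : ∀ x : Λ, θ 1 x = x
  dom_comp : ∀ g h : G, ∀ x ∈ S (h⁻¹), θ h x ∈ S h ∩ S (g⁻¹) → x ∈ S ((g * h)⁻¹)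
  comp : ∀ g h : G, ∀ x ∈ S (h⁻¹), θ h x ∈ S h ∩ S (g⁻¹) → θ g (θ h x) = θ (g * h) x

/-- A partial action of a group `G` on a set `X`: subsets `Y g ⊆ X` together
with bijections `θ g : Y (g⁻¹) → Y g` (encoded as total maps normalized to be
the identity off the domain) satisfying the partial action axioms. -/
structure SetPartialAction (G : Type*) [Group G] (X : Type*) where
  Y : G → Set X
  act : G → X → X
  maps_to : ∀ g : G, ∀ x ∈ Y (g⁻¹), act g x ∈ Y g
  injOn : ∀ g : G, Set.InjOn (act g) (Y (g⁻¹))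
  surjOn : ∀ g : G, Set.SurjOn (act g) (Y (g⁻¹)) (Y g)
  Y_one : Y (1 : G) = Set.univ
  one_act : ∀ x : X, act 1 x = x
  dom_comp : ∀ g h : G, ∀ x ∈ Y (h⁻¹), act h x ∈ Y h ∩ Y (g⁻¹) → x ∈ Y ((g * h)⁻¹)
  comp : ∀ g h : G, ∀ x ∈ Y (h⁻¹), act h x ∈ Y h ∩ Y (g⁻¹) → act g (act h x) = act (g * h) x
  norm : ∀ g : G, ∀ x : X, x ∉ Y (g⁻¹) → act g x = x

/-- A partial action of a group `G` on the `K`-algebra `K^n` by `K`-algebra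
isomorphisms (with the maps normalized to be `0` off their domains). -/
structure AlgebraPartialAction (K : Type*) [Field K] (G : Type*) [Group G] (n : ℕ) where
  S : G → Set (Fin n → K)
  act : G → (Fin n → K) → (Fin n → K)
  isPartialAction : IsPartialAction K G (Fin n → K) S act
  norm : ∀ g : G, ∀ x : Fin n → K, x ∉ S (g⁻¹) → act g x = 0

/-!
Every ideal of `K^n` is a coordinate ideal `⨁_{i ∈ X} K eᵢ`, so `S g` is determined by
`X g = {i | eᵢ ∈ S g}`. The `eᵢ` are exactly the nonzero idempotents `u` with `u Λ = K u`, and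
this property is transported by every algebra isomorphism `θ g : S g⁻¹ → S g`; hence `θ g`
maps the `eᵢ` in its domain to `eⱼ`'s, which gives the partial action on `{e₁, …, eₙ}`.
Conversely a partial action on the `eᵢ` extends linearly to `K^n`. The two constructions are
inverse because `θ g` is determined by its values on the `eᵢ`: if `θ g eᵢ = eₖ` then
`(θ g x) k • eₖ = θ g (eᵢ * x) = x i • eₖ`.
-/

theorem Pi.single_one_mul {ι R : Type*} [DecidableEq ι] [Semiring R] (i : ι) (x : ι → R) :
    Pi.single i (1 : R) * x = x i • Pi.single i 1 := by
  rw [← Pi.single_mul_left, one_mul, ← Pi.single_smul, smul_eq_mul, mul_one]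

theorem Pi.single_one_injective {ι R : Type*} [DecidableEq ι] [Semiring R] [Nontrivial R] :
    Function.Injective fun i : ι => (Pi.single i (1 : R) : ι → R) := by
  intro i j hij
  by_contra hne
  simpa [Pi.single_apply, hne] using congrFun hij i

section CoordinateIdeals

variable {ι K : Type*} [DecidableEq ι] [DivisionRing K]

theorem Ideal.single_one_mem_of_apply_ne_zero {I : Ideal (ι → K)} {x : ι → K} (hx : x ∈ I)
    {i : ι} (hxi : x i ≠ 0) : Pi.single i 1 ∈ I := by
  have : Pi.single i (x i)⁻¹ * x = Pi.single i 1 := by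
    rw [← Pi.single_mul_left, inv_mul_cancel₀ hxi]
  exact this ▸ I.mul_mem_left _ hx

theorem Ideal.mem_iff_apply_eq_zero_of_single_one_notMem [Fintype ι] (I : Ideal (ι → K))
    (x : ι → K) : x ∈ I ↔ ∀ i, Pi.single i 1 ∉ I → x i = 0 := by
  refine ⟨fun hx i hi => by_contra fun hxi => hi (I.single_one_mem_of_apply_ne_zero hx hxi),
    fun h => ?_⟩
  rw [← Finset.univ_sum_single x]
  refine I.sum_mem fun i _ => ?_
  by_cases hi : Pi.single i 1 ∈ I
  · simpa [← Pi.single_mul_right] using I.mul_mem_left x hi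
  · simp [h i hi]

end CoordinateIdeals

def IsMinimalIdempotent (R : Type*) {Λ : Type*} [CommSemiring R] [Semiring Λ] [Algebra R Λ]
    (u : Λ) : Prop :=
  IsIdempotentElem u ∧ u ≠ 0 ∧ ∀ x, ∃ c : R, u * x = c • u

section MinimalIdempotents

variable {ι R : Type*} [DecidableEq ι] [CommSemiring R]

theorem isMinimalIdempotent_single_one [Nontrivial R] (i : ι) :
    IsMinimalIdempotent R (Pi.single i (1 : R) : ι → R) := by
  refine ⟨?_, ?_, fun x => ⟨x i, Pi.single_one_mul i x⟩⟩
  · rw [IsIdempotentElem, ← Pi.single_mul, one_mul]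
  · exact fun h => by simpa using congrFun h i

theorem IsMinimalIdempotent.exists_eq_single_one [IsDomain R] {u : ι → R}
    (hu : IsMinimalIdempotent R u) : ∃ i, u = Pi.single i 1 := by
  obtain ⟨hidem, hne, hmul⟩ := hu
  obtain ⟨i, hui⟩ := Function.ne_iff.mp hne
  have hui1 : u i = 1 := mul_left_cancel₀ hui (by rw [mul_one]; exact congrFun hidem i)
  obtain ⟨c, hc⟩ := hmul (Pi.single i 1)
  rw [← Pi.single_mul_right, mul_one, hui1] at hc
  have hc1 : c = 1 := by simpa [hui1] using (congrFun hc i).symm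
  exact ⟨i, by rw [hc, hc1, one_smul]⟩

end MinimalIdempotents

namespace IsPartialAction

section Restrict

variable {G Λ X : Type*} [Group G] {S : G → Set Λ} {θ : G → Λ → Λ} {e : X → Λ}

open Classical in
noncomputable def restrictAct (hmap : ∀ g x, e x ∈ S g⁻¹ → ∃ y, θ g (e x) = e y) (g : G)
    (x : X) : X :=
  if h : e x ∈ S g⁻¹ then (hmap g x h).choose else x

theorem apply_restrictAct (hmap : ∀ g x, e x ∈ S g⁻¹ → ∃ y, θ g (e x) = e y) {g : G} {x : X}
    (hx : e x ∈ S g⁻¹) : e (restrictAct hmap g x) = θ g (e x) := by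
  classical
  rw [restrictAct, dif_pos hx]
  exact (hmap g x hx).choose_spec.symm

theorem restrictAct_of_notMem (hmap : ∀ g x, e x ∈ S g⁻¹ → ∃ y, θ g (e x) = e y) {g : G}
    {x : X} (hx : e x ∉ S g⁻¹) : restrictAct hmap g x = x := by
  classical
  rw [restrictAct, dif_neg hx]

end Restrict

variable {R G Λ : Type*} [CommRing R] [Group G] [Ring Λ] [Algebra R Λ]
  {S : G → Set Λ} {θ : G → Λ → Λ}

theorem act_zero (hθ : IsPartialAction R G Λ S θ) (g : G) : θ g 0 = 0 := by
  have h0 := hθ.zero_mem g⁻¹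
  simpa using (hθ.map_add g 0 h0 0 h0).symm

theorem act_act_inv (hθ : IsPartialAction R G Λ S θ) {g : G} {y : Λ} (hy : y ∈ S g) :
    θ g (θ g⁻¹ y) = y := by
  rw [← inv_inv g] at hy
  have hθy := hθ.maps_to g⁻¹ y hy
  rw [hθ.comp g g⁻¹ y hy ⟨hθy, hθy⟩, mul_inv_cancel, hθ.one_act]

def toIdeal (hθ : IsPartialAction R G Λ S θ) (g : G) : Ideal Λ where
  carrier := S g
  add_mem' hx hy := hθ.add_mem g _ hx _ hy
  zero_mem' := hθ.zero_mem g
  smul_mem' a x hx := hθ.mul_mem_left g a x hx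

theorem isMinimalIdempotent_act (hθ : IsPartialAction R G Λ S θ) {g : G} {u : Λ}
    (hu : u ∈ S g⁻¹) (hmin : IsMinimalIdempotent R u) : IsMinimalIdempotent R (θ g u) := by
  obtain ⟨hidem, hne, hmul⟩ := hmin
  have hθu : IsIdempotentElem (θ g u) := by
    rw [IsIdempotentElem, ← hθ.map_mul g u hu u hu, hidem.eq]
  have hθu0 : θ g u ≠ 0 := fun h0 =>
    hne (hθ.injOn g hu (hθ.zero_mem _) (h0.trans (hθ.act_zero g).symm))
  refine ⟨hθu, hθu0, fun x => ?_⟩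
  -- `θ g u * x` lies in `S g`, so it is `θ g y` for some `y`, and `u * y ∈ R u`.
  obtain ⟨y, hy, hθy⟩ := hθ.surjOn g (hθ.mul_mem_right g x _ (hθ.maps_to g u hu))
  obtain ⟨c, hc⟩ := hmul y
  refine ⟨c, ?_⟩
  calc θ g u * x = θ g u * (θ g u * x) := by rw [← mul_assoc, hθu.eq]
    _ = θ g (u * y) := by rw [← hθy, hθ.map_mul g u hu y hy]
    _ = c • θ g u := by rw [hc, hθ.map_smul g c u hu]

theorem act_apply_of_act_single_one {ι : Type*} [DecidableEq ι]
    {S : G → Set (ι → R)} {θ : G → (ι → R) → (ι → R)} (hθ : IsPartialAction R G (ι → R) S θ)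
    {g : G} {x : ι → R} (hx : x ∈ S g⁻¹) {i k : ι} (hi : Pi.single i 1 ∈ S g⁻¹)
    (hik : θ g (Pi.single i 1) = Pi.single k 1) : θ g x k = x i := by
  have h := hθ.map_mul g _ hi x hx
  rw [Pi.single_one_mul, hθ.map_smul g _ _ hi, hik, Pi.single_one_mul] at h
  simpa using (congrFun h k).symm

variable {X : Type*} {e : X → Λ}

noncomputable def restrict (hθ : IsPartialAction R G Λ S θ) (he : Function.Injective e)
    (hmap : ∀ g x, e x ∈ S g⁻¹ → ∃ y, θ g (e x) = e y) : SetPartialAction G X where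
  Y g := e ⁻¹' S g
  act := restrictAct hmap
  maps_to g x hx := by
    simpa [Set.mem_preimage, apply_restrictAct hmap hx] using hθ.maps_to g _ hx
  injOn g x hx y hy hxy := he (hθ.injOn g hx hy (by
    rw [← apply_restrictAct hmap hx, ← apply_restrictAct hmap hy, hxy]))
  surjOn g y hy := by
    rw [Set.mem_preimage, ← inv_inv g] at hy
    have hx := hθ.maps_to g⁻¹ _ hy
    rw [← apply_restrictAct hmap hy] at hx
    refine ⟨restrictAct hmap g⁻¹ y, hx, he ?_⟩
    rw [apply_restrictAct hmap hx, apply_restrictAct hmap hy,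
      hθ.act_act_inv (by rwa [inv_inv] at hy)]
  Y_one := by simp [hθ.S_one]
  one_act x := he (by rw [apply_restrictAct hmap (by simp [hθ.S_one]), hθ.one_act])
  dom_comp g h x hx hgh := hθ.dom_comp g h _ hx (apply_restrictAct hmap hx ▸ hgh)
  comp g h x hx hgh := he (by
    have hgh' : θ h (e x) ∈ S h ∩ S g⁻¹ := apply_restrictAct hmap hx ▸ hgh
    rw [apply_restrictAct hmap hgh.2, apply_restrictAct hmap hx, hθ.comp g h _ hx hgh',
      apply_restrictAct hmap (hθ.dom_comp g h _ hx hgh')])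
  norm _ _ := restrictAct_of_notMem hmap

end IsPartialAction

namespace SetPartialAction

variable {G ι : Type*} [Group G] (B : SetPartialAction G ι)

theorem inv_act_act {g : G} {i : ι} (hi : i ∈ B.Y g⁻¹) : B.act g⁻¹ (B.act g i) = i := by
  have hgi := B.maps_to g i hi
  rw [B.comp g⁻¹ g i hi ⟨hgi, by rwa [inv_inv]⟩, inv_mul_cancel, B.one_act]

theorem act_inv_mem {g : G} {j : ι} (hj : j ∈ B.Y g) : B.act g⁻¹ j ∈ B.Y g⁻¹ :=
  B.maps_to g⁻¹ j (by rwa [inv_inv])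

theorem act_inv_act {g : G} {j : ι} (hj : j ∈ B.Y g) : B.act g (B.act g⁻¹ j) = j := by
  simpa using B.inv_act_act (g := g⁻¹) (by rwa [inv_inv])

variable (R : Type*) [CommRing R]

/-- The ideal `⨁_{i ∈ Y g} R eᵢ` of `R^ι`. -/
def linearDom (g : G) : Set (ι → R) := {x | ∀ i, i ∉ B.Y g → x i = 0}

open Classical in
noncomputable def linearAct (g : G) (x : ι → R) : ι → R :=
  if x ∈ B.linearDom R g⁻¹ then (B.Y g).indicator fun j => x (B.act g⁻¹ j) else 0

variable {B R}

theorem linearAct_of_mem {g : G} {x : ι → R} (hx : x ∈ B.linearDom R g⁻¹) :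
    B.linearAct R g x = (B.Y g).indicator fun j => x (B.act g⁻¹ j) := by
  classical
  rw [linearAct, if_pos hx]

theorem linearAct_of_notMem {g : G} {x : ι → R} (hx : x ∉ B.linearDom R g⁻¹) :
    B.linearAct R g x = 0 := by
  classical
  rw [linearAct, if_neg hx]

theorem linearAct_mem (g : G) (x : ι → R) : B.linearAct R g x ∈ B.linearDom R g := by
  intro j hj
  by_cases hx : x ∈ B.linearDom R g⁻¹
  · rw [linearAct_of_mem hx, Set.indicator_of_notMem hj]
  · rw [linearAct_of_notMem hx, Pi.zero_apply]

theorem linearAct_apply_act {g : G} {x : ι → R} (hx : x ∈ B.linearDom R g⁻¹) {i : ι}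
    (hi : i ∈ B.Y g⁻¹) : B.linearAct R g x (B.act g i) = x i := by
  rw [linearAct_of_mem hx, Set.indicator_of_mem (B.maps_to g i hi), B.inv_act_act hi]

theorem single_one_mem_linearDom [DecidableEq ι] {g : G} {i : ι} (hi : i ∈ B.Y g) :
    (Pi.single i 1 : ι → R) ∈ B.linearDom R g :=
  fun k hk => Pi.single_eq_of_ne (by rintro rfl; exact hk hi) _

theorem single_one_mem_linearDom_iff [DecidableEq ι] [Nontrivial R] {g : G} {i : ι} :
    (Pi.single i 1 : ι → R) ∈ B.linearDom R g ↔ i ∈ B.Y g :=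
  ⟨fun h => by_contra fun hi => by simpa using h i hi, single_one_mem_linearDom⟩

theorem linearAct_single_one [DecidableEq ι] {g : G} {i : ι} (hi : i ∈ B.Y g⁻¹) :
    B.linearAct R g (Pi.single i 1) = Pi.single (B.act g i) 1 := by
  funext j
  rw [linearAct_of_mem (single_one_mem_linearDom hi)]
  by_cases hj : j ∈ B.Y g
  · rw [Set.indicator_of_mem hj]
    have : B.act g⁻¹ j = i ↔ j = B.act g i :=
      ⟨fun h => by rw [← h, B.act_inv_act hj], fun h => by rw [h, B.inv_act_act hi]⟩
    simp only [Pi.single_apply, this]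
  · rw [Set.indicator_of_notMem hj, Pi.single_eq_of_ne]
    rintro rfl
    exact hj (B.maps_to g i hi)

theorem mem_mul_and_act_inv_eq {g h : G} {j : ι} (hjg : j ∈ B.Y g) (hjh : B.act g⁻¹ j ∈ B.Y h) :
    j ∈ B.Y (g * h) ∧ B.act (g * h)⁻¹ j = B.act h⁻¹ (B.act g⁻¹ j) := by
  set m := B.act h⁻¹ (B.act g⁻¹ j)
  have hm : m ∈ B.Y h⁻¹ := B.act_inv_mem hjh
  have hhm : B.act h m = B.act g⁻¹ j := B.act_inv_act hjh
  have hdom : B.act h m ∈ B.Y h ∩ B.Y g⁻¹ := hhm ▸ ⟨hjh, B.act_inv_mem hjg⟩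
  have hm' : m ∈ B.Y (g * h)⁻¹ := B.dom_comp g h m hm hdom
  have hghm : B.act (g * h) m = j := by rw [← B.comp g h m hm hdom, hhm, B.act_inv_act hjg]
  exact ⟨hghm ▸ B.maps_to _ m hm', by rw [← hghm, B.inv_act_act hm']⟩

theorem mem_and_act_mem_of_apply_ne_zero {g h : G} {x : ι → R} (hx : x ∈ B.linearDom R h⁻¹)
    (hhx : B.linearAct R h x ∈ B.linearDom R g⁻¹) {m : ι} (hm : x m ≠ 0) :
    m ∈ B.Y h⁻¹ ∧ B.act h m ∈ B.Y g⁻¹ := by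
  have hmh : m ∈ B.Y h⁻¹ := by_contra fun h' => hm (hx m h')
  refine ⟨hmh, by_contra fun h' => hm ?_⟩
  rw [← linearAct_apply_act hx hmh]
  exact hhx _ h'

theorem mem_linearDom_mul_inv {g h : G} {x : ι → R} (hx : x ∈ B.linearDom R h⁻¹)
    (hhx : B.linearAct R h x ∈ B.linearDom R g⁻¹) : x ∈ B.linearDom R (g * h)⁻¹ :=
  fun m hm => by_contra fun hxm =>
    have hsupp := mem_and_act_mem_of_apply_ne_zero hx hhx hxm
    hm (B.dom_comp g h m hsupp.1 ⟨B.maps_to h m hsupp.1, hsupp.2⟩)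

theorem linearAct_linearAct {g h : G} {x : ι → R} (hx : x ∈ B.linearDom R h⁻¹)
    (hhx : B.linearAct R h x ∈ B.linearDom R g⁻¹) :
    B.linearAct R g (B.linearAct R h x) = B.linearAct R (g * h) x := by
  have hxgh := mem_linearDom_mul_inv hx hhx
  funext j
  rw [linearAct_of_mem hhx, linearAct_of_mem hxgh]
  by_cases hj : j ∈ B.Y g ∧ B.act g⁻¹ j ∈ B.Y h
  · obtain ⟨hjgh, hact⟩ := B.mem_mul_and_act_inv_eq hj.1 hj.2
    rw [Set.indicator_of_mem hj.1, linearAct_of_mem hx, Set.indicator_of_mem hj.2,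
      Set.indicator_of_mem hjgh, hact]
  · have hL : (B.Y g).indicator (fun k => B.linearAct R h x (B.act g⁻¹ k)) j = 0 :=
      Set.indicator_apply_eq_zero.mpr fun hjg => linearAct_mem h x _ (hj ⟨hjg, ·⟩)
    rw [hL, eq_comm, Set.indicator_apply_eq_zero]
    intro hjgh
    by_contra hxm
    -- `m = (gh)⁻¹ j` lies in the domain of `h` and `h m` in that of `g`, so `j = g (h m)`.
    obtain ⟨hmh, hhm⟩ := mem_and_act_mem_of_apply_ne_zero hx hhx hxm
    have hj' := B.comp g h _ hmh ⟨B.maps_to h _ hmh, hhm⟩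
    rw [B.act_inv_act hjgh] at hj'
    exact hj ⟨hj' ▸ B.maps_to g _ hhm, by rw [← hj', B.inv_act_act hhm]; exact B.maps_to h _ hmh⟩

theorem isPartialAction_linearAct :
    IsPartialAction R G (ι → R) (B.linearDom R) (B.linearAct R) where
  zero_mem g i _ := rfl
  add_mem g x hx y hy i hi := by simp [hx i hi, hy i hi]
  neg_mem g x hx i hi := by simp [hx i hi]
  smul_mem g r x hx i hi := by simp [hx i hi]
  mul_mem_left g a x hx i hi := by simp [hx i hi]
  mul_mem_right g a x hx i hi := by simp [hx i hi]
  maps_to g x _ := linearAct_mem g x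
  map_add g x hx y hy := by
    have hxy : x + y ∈ B.linearDom R g⁻¹ := fun i hi => by simp [hx i hi, hy i hi]
    ext j
    by_cases hj : j ∈ B.Y g <;>
      simp [linearAct_of_mem hx, linearAct_of_mem hy, linearAct_of_mem hxy, hj]
  map_mul g x hx y hy := by
    have hxy : x * y ∈ B.linearDom R g⁻¹ := fun i hi => by simp [hx i hi]
    ext j
    by_cases hj : j ∈ B.Y g <;>
      simp [linearAct_of_mem hx, linearAct_of_mem hy, linearAct_of_mem hxy, hj]
  map_smul g r x hx := by
    have hrx : r • x ∈ B.linearDom R g⁻¹ := fun i hi => by simp [hx i hi]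
    ext j
    by_cases hj : j ∈ B.Y g <;> simp [linearAct_of_mem hx, linearAct_of_mem hrx, hj]
  injOn g x hx y hy hxy := by
    funext i
    by_cases hi : i ∈ B.Y g⁻¹
    · rw [← linearAct_apply_act hx hi, ← linearAct_apply_act hy hi, hxy]
    · rw [hx i hi, hy i hi]
  surjOn g y hy := by
    refine ⟨B.linearAct R g⁻¹ y, linearAct_mem _ _, funext fun j => ?_⟩
    by_cases hj : j ∈ B.Y g
    · rw [linearAct_of_mem (linearAct_mem _ _), Set.indicator_of_mem hj,
        linearAct_apply_act (by rwa [inv_inv]) (by rwa [inv_inv])]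
    · rw [linearAct_mem g _ j hj, hy j hj]
  S_one := Set.eq_univ_of_forall fun x i hi => absurd (B.Y_one ▸ Set.mem_univ i) hi
  one_act x := by
    have hx : x ∈ B.linearDom R 1⁻¹ := fun i hi => absurd (by simp [B.Y_one]) hi
    funext j
    rw [linearAct_of_mem hx, Set.indicator_of_mem (by simp [B.Y_one]), inv_one, B.one_act]
  dom_comp g h x hx hhx := mem_linearDom_mul_inv hx hhx.2
  comp g h x hx hhx := linearAct_linearAct hx hhx.2

end SetPartialAction

attribute [ext] SetPartialAction AlgebraPartialAction

section Correspondence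

variable {K G : Type*} [Field K] [Group G] {n : ℕ}

namespace AlgebraPartialAction

theorem exists_act_single_one (A : AlgebraPartialAction K G n) (g : G) (i : Fin n)
    (hi : Pi.single i 1 ∈ A.S g⁻¹) : ∃ j, A.act g (Pi.single i 1) = Pi.single j 1 :=
  (A.isPartialAction.isMinimalIdempotent_act hi
    (isMinimalIdempotent_single_one i)).exists_eq_single_one

noncomputable def toSetPartialAction (A : AlgebraPartialAction K G n) :
    SetPartialAction G (Fin n) :=
  A.isPartialAction.restrict Pi.single_one_injective A.exists_act_single_one

end AlgebraPartialAction

variable (K) in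
noncomputable def SetPartialAction.toAlgebraPartialAction (B : SetPartialAction G (Fin n)) :
    AlgebraPartialAction K G n where
  S := B.linearDom K
  act := B.linearAct K
  isPartialAction := B.isPartialAction_linearAct
  norm _ _ := SetPartialAction.linearAct_of_notMem

namespace AlgebraPartialAction

theorem S_eq_linearDom (A : AlgebraPartialAction K G n) (g : G) :
    A.S g = A.toSetPartialAction.linearDom K g :=
  Set.ext (Ideal.mem_iff_apply_eq_zero_of_single_one_notMem (A.isPartialAction.toIdeal g))

theorem act_single_one (A : AlgebraPartialAction K G n) {g : G} {i : Fin n}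
    (hi : i ∈ A.toSetPartialAction.Y g⁻¹) :
    A.act g (Pi.single i 1) = Pi.single (A.toSetPartialAction.act g i) 1 :=
  (IsPartialAction.apply_restrictAct A.exists_act_single_one hi).symm

theorem act_eq_linearAct (A : AlgebraPartialAction K G n) (g : G) :
    A.act g = A.toSetPartialAction.linearAct K g := by
  set B := A.toSetPartialAction
  funext x
  by_cases hx : x ∈ A.S g⁻¹
  · rw [SetPartialAction.linearAct_of_mem (A.S_eq_linearDom g⁻¹ ▸ hx)]
    funext j
    by_cases hj : j ∈ B.Y g
    · have hi := B.act_inv_mem hj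
      rw [Set.indicator_of_mem hj, A.isPartialAction.act_apply_of_act_single_one hx hi]
      rw [A.act_single_one hi, B.act_inv_act hj]
    · rw [Set.indicator_of_notMem hj]
      exact by_contra fun hxj => hj (Ideal.single_one_mem_of_apply_ne_zero
        (I := A.isPartialAction.toIdeal g) (A.isPartialAction.maps_to g x hx) hxj)
  · rw [A.norm g x hx, SetPartialAction.linearAct_of_notMem (A.S_eq_linearDom g⁻¹ ▸ hx)]

theorem toSetPartialAction_toAlgebraPartialAction (A : AlgebraPartialAction K G n) :
    A.toSetPartialAction.toAlgebraPartialAction K = A := by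
  ext1
  · exact funext fun g => (A.S_eq_linearDom g).symm
  · exact funext fun g => (A.act_eq_linearAct g).symm

end AlgebraPartialAction

theorem SetPartialAction.toAlgebraPartialAction_toSetPartialAction
    (B : SetPartialAction G (Fin n)) :
    (B.toAlgebraPartialAction K).toSetPartialAction = B := by
  ext1
  · ext g i
    exact B.single_one_mem_linearDom_iff
  · funext g i
    by_cases hi : i ∈ B.Y g⁻¹
    · exact Pi.single_one_injective (R := K) <|
        ((B.toAlgebraPartialAction K).act_single_one (B.single_one_mem_linearDom hi)).symm.trans
          (B.linearAct_single_one hi)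
    · rw [B.norm g i hi]
      exact (B.toAlgebraPartialAction K).toSetPartialAction.norm g i
        (mt B.single_one_mem_linearDom_iff.mp hi)

end Correspondence

noncomputable def AlgebraPartialAction.equivSetPartialAction (K G : Type*) [Field K] [Group G]
    (n : ℕ) : AlgebraPartialAction K G n ≃ SetPartialAction G (Fin n) where
  toFun := toSetPartialAction
  invFun := SetPartialAction.toAlgebraPartialAction K
  left_inv := toSetPartialAction_toAlgebraPartialAction
  right_inv := SetPartialAction.toAlgebraPartialAction_toSetPartialAction

theorem statement15_general (K : Type*) [Field K] (G : Type*) [Group G] (n : ℕ) :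
    ∃ Φ : AlgebraPartialAction K G n ≃ SetPartialAction G (Fin n),
      ∀ (A : AlgebraPartialAction K G n) (g : G),
        (A.S g = {x : Fin n → K | ∀ i : Fin n, i ∉ (Φ A).Y g → x i = 0}) ∧
        (∀ i : Fin n, i ∈ (Φ A).Y g ↔ Pi.single i (1 : K) ∈ A.S g) ∧
        (∀ i ∈ (Φ A).Y (g⁻¹),
          A.act g (Pi.single i (1 : K)) = Pi.single ((Φ A).act g i) (1 : K)) :=
  ⟨AlgebraPartialAction.equivSetPartialAction K G n, fun A g =>
    ⟨A.S_eq_linearDom g, fun _ => Iff.rfl, fun _ => A.act_single_one⟩⟩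

/-- Every partial action of `G` on `Λ = K^n` by `K`-algebra
isomorphisms restricts to a partial action of `G` on the set of standard
primitive idempotents `{e_1, …, e_n}` (identified with `Fin n`): each `S g` is
the span of the idempotents it contains, and restriction gives a bijection
between partial actions of `G` on `K^n` and partial actions of `G` on
`{e_1, …, e_n}`. -/
theorem statement15 (K : Type*) [Field K] (G : Type*) [Group G] (n : ℕ) (hn : 0 < n) :
    ∃ Φ : AlgebraPartialAction K G n ≃ SetPartialAction G (Fin n),
      ∀ (A : AlgebraPartialAction K G n) (g : G),
        (A.S g = {x : Fin n → K | ∀ i : Fin n, i ∉ (Φ A).Y g → x i = 0}) ∧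
        (∀ i : Fin n, i ∈ (Φ A).Y g ↔ Pi.single i (1 : K) ∈ A.S g) ∧
        (∀ i ∈ (Φ A).Y (g⁻¹),
          A.act g (Pi.single i (1 : K)) = Pi.single ((Φ A).act g i) (1 : K)) :=
  statement15_general K G n
end

section
/- Let K be a field, n a positive integer, Λ = K^n = ⨁_{i=1}^n K e_i, and α a partial action of a group G on Λ by K-algebra isomorphisms. Let θ be the induced partial action of G on the set Y = {e_1,…,e_n} of standard primitive idempotents, and let (X, ·) be an enveloping action of (Y, θ): a G-set X containing Y with X = ∪_{g∈G} g·Y, Y_g = Y ∩ g·Y for all g ∈ G, and θ_g(y) = g·y for all y ∈ Y_{g⁻¹}. Let B = ⨁_{x∈X} K (finitely supported functions X → K with pointwise operations) with G acting by permuting coordinates: (β¹_g f)(x) = f(g⁻¹·x). Then (B, β¹), together with the embedding Λ → B sending e_i to the indicator function of e_i ∈ X, is an enveloping action of (Λ, α). -/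
/-- `(L, β)` together with the embedding `φ : Λ → L` is an enveloping action
(globalization) of the partial action `(S, θ)` of `G` on the `R`-algebra `Λ`:
`β` is a global action of `G` on `L` by `R`-algebra automorphisms, `φ` is an
injective homomorphism of `R`-algebras whose range is an ideal of `L`,
`L = Σ_g β g (φ(Λ))`, `φ(S g) = φ(Λ) ∩ β g (φ(Λ))`, and `φ ∘ θ g = β g ∘ φ`
on `S (g⁻¹)`. -/
structure IsEnvelopingAction (R : Type*) (G : Type*) (Λ : Type*) (L : Type*)
    [CommRing R] [Group G] [Ring Λ] [Algebra R Λ]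
    [NonUnitalNonAssocSemiring L] [Module R L]
    (S : G → Set Λ) (θ : G → Λ → Λ) (β : G → L → L) (φ : Λ → L) : Prop where
  β_one : ∀ x : L, β 1 x = x
  β_comp : ∀ (g h : G) (x : L), β g (β h x) = β (g * h) x
  β_add : ∀ (g : G) (x y : L), β g (x + y) = β g x + β g y
  β_mul : ∀ (g : G) (x y : L), β g (x * y) = β g x * β g y
  β_smul : ∀ (g : G) (r : R) (x : L), β g (r • x) = r • β g x
  β_bijective : ∀ g : G, Function.Bijective (β g)
  φ_injective : Function.Injective φ
  φ_add : ∀ x y : Λ, φ (x + y) = φ x + φ y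
  φ_mul : ∀ x y : Λ, φ (x * y) = φ x * φ y
  φ_smul : ∀ (r : R) (x : Λ), φ (r • x) = r • φ x
  ideal_mul_left : ∀ a : L, ∀ x ∈ Set.range φ, a * x ∈ Set.range φ
  ideal_mul_right : ∀ a : L, ∀ x ∈ Set.range φ, x * a ∈ Set.range φ
  spans : AddSubmonoid.closure (⋃ g : G, β g '' Set.range φ) = (⊤ : AddSubmonoid L)
  intersect : ∀ g : G, φ '' S g = Set.range φ ∩ β g '' Set.range φ
  equivariant : ∀ g : G, ∀ a ∈ S (g⁻¹), φ (θ g a) = β g (φ a)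

/-!
Every ideal of `K^n` is spanned by the primitive idempotents `e_i` it contains, so a vector lies
in `S g` exactly when its support lies in `Y_g`, and `θ g` is determined by the permutation it
induces on `Y_{g⁻¹}`. Under the embedding `e_i ↦ δ_{e_i}` the image of `Λ` in `B` consists of
the functions supported in `Y`, and its `g`-translate of those supported in `g • Y`; the axioms
of an enveloping action for `(B, β¹)` thus become those of `(X, ·)`, read on supports.
-/

open Finsupp

theorem Ideal.mem_iff_forall_single_one_mem {I K : Type*} [Fintype I] [DecidableEq I]
    [DivisionRing K] (J : Ideal (I → K)) (v : I → K) :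
    v ∈ J ↔ ∀ i, v i ≠ 0 → Pi.single i 1 ∈ J := by
  refine ⟨fun hv i hi => ?_, fun h => ?_⟩
  · rw [← inv_mul_cancel₀ hi, Pi.single_mul_left]
    exact J.mul_mem_left _ hv
  · rw [← Finset.univ_sum_single v]
    refine J.sum_mem fun i _ => ?_
    rcases eq_or_ne (v i) 0 with hi | hi
    · rw [hi, Pi.single_zero]
      exact J.zero_mem
    · rw [← mul_one (v i), Pi.single_mul_right]
      exact J.mul_mem_left _ (h i hi)

namespace IsPartialAction

variable {R G Λ : Type*} [CommRing R] [Group G] [Ring Λ] [Algebra R Λ]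
  {S : G → Set Λ} {θ : G → Λ → Λ}

def ideal (hpa : IsPartialAction R G Λ S θ) (g : G) : Ideal Λ where
  carrier := S g
  add_mem' {a b} ha hb := hpa.add_mem g a ha b hb
  zero_mem' := hpa.zero_mem g
  smul_mem' := hpa.mul_mem_left g

theorem map_zero (hpa : IsPartialAction R G Λ S θ) (g : G) : θ g 0 = 0 := by
  simpa using hpa.map_smul g 0 0 (hpa.zero_mem _)

theorem map_sum (hpa : IsPartialAction R G Λ S θ) (g : G) {J : Type*} (s : Finset J)
    (f : J → Λ) (hf : ∀ j ∈ s, f j ∈ S g⁻¹) :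
    θ g (∑ j ∈ s, f j) = ∑ j ∈ s, θ g (f j) := by
  induction s using Finset.cons_induction with
  | empty => simpa using hpa.map_zero g
  | cons a s ha ih =>
    rw [Finset.forall_mem_cons] at hf
    rw [Finset.sum_cons, Finset.sum_cons, ← ih hf.2]
    have hsum : ∑ j ∈ s, f j ∈ hpa.ideal g⁻¹ := Ideal.sum_mem _ hf.2
    exact hpa.map_add g _ hf.1 _ hsum

end IsPartialAction

section PermutationAction

variable {G X M : Type*} [Group G] [MulAction G X]

theorem equivMapDomain_toPerm_apply [Zero M] (g : G) (f : X →₀ M) (x : X) :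
    equivMapDomain (MulAction.toPerm g) f x = f (g⁻¹ • x) := by
  rw [equivMapDomain_apply, MulAction.toPerm_symm_apply]

theorem equivMapDomain_toPerm_one [Zero M] (f : X →₀ M) :
    equivMapDomain (MulAction.toPerm (1 : G)) f = f := by
  ext x
  rw [equivMapDomain_toPerm_apply, inv_one, one_smul]

theorem equivMapDomain_toPerm_toPerm [Zero M] (g h : G) (f : X →₀ M) :
    equivMapDomain (MulAction.toPerm g) (equivMapDomain (MulAction.toPerm h) f) =
      equivMapDomain (MulAction.toPerm (g * h)) f := by
  ext x
  simp only [equivMapDomain_toPerm_apply, mul_inv_rev, mul_smul]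

theorem equivMapDomain_toPerm_mul [MulZeroClass M] (g : G) (f₁ f₂ : X →₀ M) :
    equivMapDomain (MulAction.toPerm g) (f₁ * f₂) =
      equivMapDomain (MulAction.toPerm g) f₁ * equivMapDomain (MulAction.toPerm g) f₂ := by
  ext x
  simp only [equivMapDomain_toPerm_apply, mul_apply]

end PermutationAction

section ExtendByZero

variable {I X R : Type*} [Fintype I]

noncomputable def extendByZero [AddCommMonoid R] (ι : I → X) (v : I → R) : X →₀ R :=
  ∑ i, single (ι i) (v i)

variable [Semiring R] {ι : I → X}

theorem extendByZero_apply_self (hι : Function.Injective ι) (v : I → R) (j : I) :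
    extendByZero ι v (ι j) = v j := by
  classical
  simp [extendByZero, finsetSum_apply, single_apply, hι.eq_iff]

theorem extendByZero_apply_of_notMem {x : X} (hx : x ∉ Set.range ι) (v : I → R) :
    extendByZero ι v x = 0 := by
  classical
  simp only [extendByZero, finsetSum_apply, single_apply]
  exact Finset.sum_eq_zero fun i _ => if_neg fun h => hx ⟨i, h⟩

theorem extendByZero_zero : extendByZero ι (0 : I → R) = 0 := by
  simp [extendByZero]

theorem extendByZero_single [DecidableEq I] (i : I) (c : R) :
    extendByZero ι (Pi.single i c) = single (ι i) c := by
  rw [extendByZero, Finset.sum_eq_single i (fun j _ hji => by simp [hji]) (by simp),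
    Pi.single_eq_same]

theorem extendByZero_add (v w : I → R) :
    extendByZero ι (v + w) = extendByZero ι v + extendByZero ι w := by
  simp [extendByZero, single_add, Finset.sum_add_distrib]

theorem extendByZero_sum {J : Type*} (s : Finset J) (v : J → I → R) :
    extendByZero ι (∑ j ∈ s, v j) = ∑ j ∈ s, extendByZero ι (v j) := by
  simp only [extendByZero, Finset.sum_apply, single_finsetSum]
  exact Finset.sum_comm

theorem extendByZero_smul (r : R) (v : I → R) :
    extendByZero ι (r • v) = r • extendByZero ι v := by
  simp [extendByZero, smul_single, Finset.smul_sum]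

theorem extendByZero_mul (hι : Function.Injective ι) (v w : I → R) :
    extendByZero ι (v * w) = extendByZero ι v * extendByZero ι w := by
  ext x
  by_cases hx : x ∈ Set.range ι
  · obtain ⟨i, rfl⟩ := hx
    simp only [mul_apply, extendByZero_apply_self hι, Pi.mul_apply]
  · simp only [mul_apply, extendByZero_apply_of_notMem hx, zero_mul]

theorem extendByZero_injective (hι : Function.Injective ι) :
    Function.Injective (extendByZero (R := R) ι) := fun v w h =>
  funext fun i => by rw [← extendByZero_apply_self hι v, h, extendByZero_apply_self hι]

theorem mem_range_extendByZero_iff (hι : Function.Injective ι) (f : X →₀ R) :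
    f ∈ Set.range (extendByZero ι) ↔ ∀ x, f x ≠ 0 → x ∈ Set.range ι := by
  refine ⟨?_, fun h => ⟨fun i => f (ι i), Finsupp.ext fun x => ?_⟩⟩
  · rintro ⟨v, rfl⟩ x hx
    by_contra hx'
    exact hx (extendByZero_apply_of_notMem hx' v)
  · by_cases hx : x ∈ Set.range ι
    · obtain ⟨i, rfl⟩ := hx
      exact extendByZero_apply_self hι _ i
    · rw [extendByZero_apply_of_notMem hx, not_ne_iff.mp (mt (h x) hx)]

theorem mul_mem_range_extendByZero (hι : Function.Injective ι) (a : X →₀ R) {f : X →₀ R}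
    (hf : f ∈ Set.range (extendByZero ι)) : a * f ∈ Set.range (extendByZero ι) :=
  (mem_range_extendByZero_iff hι _).2 fun x hx => by
    rw [mul_apply] at hx
    exact (mem_range_extendByZero_iff hι f).1 hf x (right_ne_zero_of_mul hx)

theorem extendByZero_mul_mem_range (hι : Function.Injective ι) (a : X →₀ R) {f : X →₀ R}
    (hf : f ∈ Set.range (extendByZero ι)) : f * a ∈ Set.range (extendByZero ι) :=
  (mem_range_extendByZero_iff hι _).2 fun x hx => by
    rw [mul_apply] at hx
    exact (mem_range_extendByZero_iff hι f).1 hf x (left_ne_zero_of_mul hx)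

variable {G : Type*} [Group G] [MulAction G X]

theorem equivMapDomain_toPerm_extendByZero (g : G) (v : I → R) :
    equivMapDomain (MulAction.toPerm g) (extendByZero ι v) = extendByZero (g • ι ·) v := by
  rw [extendByZero, ← domCongr_apply, map_sum]
  simp only [domCongr_apply, equivMapDomain_single, MulAction.toPerm_apply, extendByZero]

theorem mem_image_range_extendByZero_iff (hι : Function.Injective ι) (g : G) (f : X →₀ R) :
    f ∈ equivMapDomain (MulAction.toPerm g) '' Set.range (extendByZero ι) ↔
      ∀ x, f x ≠ 0 → x ∈ (g • ·) '' Set.range ι := by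
  rw [← Set.range_comp, ← Set.range_comp]
  simp only [Function.comp_def, equivMapDomain_toPerm_extendByZero]
  exact mem_range_extendByZero_iff ((MulAction.injective g).comp hι) f

theorem closure_iUnion_image_range_extendByZero [DecidableEq I]
    (hcover : ∀ x : X, ∃ (g : G) (i : I), x = g • ι i) :
    AddSubmonoid.closure
      (⋃ g : G, equivMapDomain (MulAction.toPerm g) '' Set.range (extendByZero (R := R) ι)) =
      ⊤ := by
  refine eq_top_iff.2 fun f _ => ?_
  rw [← f.sum_single]
  refine AddSubmonoidClass.finsuppSum_mem _ _ _ fun x _ => ?_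
  obtain ⟨g, i, rfl⟩ := hcover x
  refine AddSubmonoid.subset_closure
    (Set.mem_iUnion.2 ⟨g, _, ⟨Pi.single i (f (g • ι i)), rfl⟩, ?_⟩)
  rw [extendByZero_single, equivMapDomain_single, MulAction.toPerm_apply]

end ExtendByZero

namespace IsPartialAction

variable {I K G X : Type*} [Fintype I] [DecidableEq I] [Field K] [Group G] [MulAction G X]
  {S : G → Set (I → K)} {θ : G → (I → K) → I → K} {ι : I → X}

theorem mem_iff_forall_single_one_mem (hpa : IsPartialAction K G (I → K) S θ) (g : G)
    (v : I → K) : v ∈ S g ↔ ∀ i, v i ≠ 0 → Pi.single i 1 ∈ S g :=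
  (hpa.ideal g).mem_iff_forall_single_one_mem v

theorem image_extendByZero (hpa : IsPartialAction K G (I → K) S θ) (hι : Function.Injective ι)
    (g : G) (hinter : ∀ i, Pi.single i (1 : K) ∈ S g ↔ ι i ∈ (g • ·) '' Set.range ι) :
    extendByZero ι '' S g =
      Set.range (extendByZero ι) ∩
        equivMapDomain (MulAction.toPerm g) '' Set.range (extendByZero ι) := by
  ext f
  simp only [Set.mem_inter_iff, mem_image_range_extendByZero_iff hι]
  constructor
  · rintro ⟨v, hv, rfl⟩
    refine ⟨⟨v, rfl⟩, fun x hx => ?_⟩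
    obtain ⟨i, rfl⟩ := (mem_range_extendByZero_iff hι _).1 ⟨v, rfl⟩ x hx
    rw [extendByZero_apply_self hι] at hx
    exact (hinter i).1 ((hpa.mem_iff_forall_single_one_mem g v).1 hv i hx)
  · rintro ⟨⟨v, rfl⟩, h⟩
    refine ⟨v, (hpa.mem_iff_forall_single_one_mem g v).2 fun i hi => (hinter i).2 ?_, rfl⟩
    exact h (ι i) (by rwa [extendByZero_apply_self hι])

theorem extendByZero_map_single (hpa : IsPartialAction K G (I → K) S θ) (g : G)
    (hrestr : ∀ i, Pi.single i (1 : K) ∈ S g⁻¹ →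
      ∃ i', ι i' = g • ι i ∧ θ g (Pi.single i 1) = Pi.single i' 1)
    (i : I) (c : K) (hc : Pi.single i c ∈ S g⁻¹) :
    extendByZero ι (θ g (Pi.single i c)) = single (g • ι i) c := by
  rcases eq_or_ne c 0 with rfl | hc0
  · rw [Pi.single_zero, hpa.map_zero, extendByZero_zero, single_zero]
  have hsingle : Pi.single i (1 : K) ∈ S g⁻¹ := by
    simpa [hc0] using (hpa.mem_iff_forall_single_one_mem g⁻¹ _).1 hc i
  obtain ⟨i', hi', hθ⟩ := hrestr i hsingle
  have hsmul (j : I) : Pi.single j c = c • Pi.single j (1 : K) := by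
    rw [← Pi.single_smul', smul_eq_mul, mul_one]
  rw [hsmul, hpa.map_smul g c _ hsingle, hθ, ← hsmul, extendByZero_single, hi']

theorem extendByZero_map (hpa : IsPartialAction K G (I → K) S θ) (g : G)
    (hrestr : ∀ i, Pi.single i (1 : K) ∈ S g⁻¹ →
      ∃ i', ι i' = g • ι i ∧ θ g (Pi.single i 1) = Pi.single i' 1)
    (v : I → K) (hv : v ∈ S g⁻¹) :
    extendByZero ι (θ g v) = equivMapDomain (MulAction.toPerm g) (extendByZero ι v) := by
  have hsingle (i : I) : Pi.single i (v i) ∈ S g⁻¹ := by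
    rw [← mul_one (v i), Pi.single_mul_right]
    exact hpa.mul_mem_right _ _ v hv
  calc extendByZero ι (θ g v) = extendByZero ι (θ g (∑ i, Pi.single i (v i))) := by
        rw [Finset.univ_sum_single]
    _ = ∑ i, single (g • ι i) (v i) := by
        rw [hpa.map_sum g _ _ fun i _ => hsingle i, extendByZero_sum]
        exact Finset.sum_congr rfl fun i _ =>
          hpa.extendByZero_map_single g hrestr i (v i) (hsingle i)
    _ = equivMapDomain (MulAction.toPerm g) (extendByZero ι v) :=
        (equivMapDomain_toPerm_extendByZero g v).symm

theorem isEnvelopingAction_extendByZero (hpa : IsPartialAction K G (I → K) S θ)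
    (hι : Function.Injective ι) (hcover : ∀ x : X, ∃ (g : G) (i : I), x = g • ι i)
    (hinter : ∀ (g : G) (i : I),
      Pi.single i (1 : K) ∈ S g ↔ ι i ∈ (g • ·) '' Set.range ι)
    (hrestr : ∀ (g : G) (i : I), Pi.single i (1 : K) ∈ S g⁻¹ →
      ∃ i', ι i' = g • ι i ∧ θ g (Pi.single i 1) = Pi.single i' 1) :
    IsEnvelopingAction K G (I → K) (X →₀ K) S θ
      (fun g f => equivMapDomain (MulAction.toPerm g) f) (extendByZero ι) where
  β_one := equivMapDomain_toPerm_one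
  β_comp := equivMapDomain_toPerm_toPerm
  β_add g := (Finsupp.domCongr (MulAction.toPerm g)).map_add
  β_mul := equivMapDomain_toPerm_mul
  β_smul g := (Finsupp.domLCongr (MulAction.toPerm g)).map_smul
  β_bijective g := (equivCongrLeft (MulAction.toPerm g)).bijective
  φ_injective := extendByZero_injective hι
  φ_add := extendByZero_add
  φ_mul := extendByZero_mul hι
  φ_smul := extendByZero_smul
  ideal_mul_left := mul_mem_range_extendByZero hι
  ideal_mul_right := extendByZero_mul_mem_range hι
  spans := closure_iUnion_image_range_extendByZero hcover
  intersect g := hpa.image_extendByZero hι g (hinter g)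
  equivariant g := hpa.extendByZero_map g (hrestr g)

end IsPartialAction

theorem statement16_general {K : Type*} [Field K] {G : Type*} [Group G] (n : ℕ)
    (S : G → Set (Fin n → K)) (θ : G → (Fin n → K) → (Fin n → K))
    (hpa : IsPartialAction K G (Fin n → K) S θ)
    (X : Type*) [MulAction G X]
    (ι : Fin n → X) (hι : Function.Injective ι)
    (hcover : ∀ x : X, ∃ (g : G) (i : Fin n), x = g • ι i)
    (hinter : ∀ (g : G) (i : Fin n),
      Pi.single i (1 : K) ∈ S g ↔ ι i ∈ (g • ·) '' Set.range ι)
    (hrestr : ∀ (g : G) (i : Fin n), Pi.single i (1 : K) ∈ S (g⁻¹) →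
      ∃ i' : Fin n, ι i' = g • ι i ∧ θ g (Pi.single i (1 : K)) = Pi.single i' (1 : K)) :
    IsEnvelopingAction K G (Fin n → K) (X →₀ K) S θ
      (fun g f => Finsupp.equivMapDomain (MulAction.toPerm g) f)
      (fun v => ∑ i : Fin n, Finsupp.single (ι i) (v i)) :=
  hpa.isEnvelopingAction_extendByZero hι hcover hinter hrestr

/-- Let `α = (S, θ)` be a partial action of `G` on
`Λ = K^n` by `K`-algebra isomorphisms, and let `(X, ·)` be an enveloping action
of the induced partial action on the set `Y = {e_1, …, e_n}` of standard
primitive idempotents, embedded in `X` via the injection `ι`: `X` is covered by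
the `G`-translates of `ι(Y)`, `e_i ∈ S g ↔ ι i ∈ Y ∩ g • ι(Y)`, and `θ g`
agrees with the `G`-action on idempotents in `S (g⁻¹)`. Let `B = ⨁_{x ∈ X} K`
(finitely supported functions `X → K` with pointwise operations) with `G`
permuting coordinates, `(β¹ g f) x = f (g⁻¹ • x)`. Then `(B, β¹)`, together
with the embedding `Λ → B` sending `e_i` to the indicator of `ι i`, is an
enveloping action of `(Λ, α)`. -/
theorem statement16 {K : Type*} [Field K] {G : Type*} [Group G] (n : ℕ) (hn : 0 < n)
    (S : G → Set (Fin n → K)) (θ : G → (Fin n → K) → (Fin n → K))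
    (hpa : IsPartialAction K G (Fin n → K) S θ)
    (X : Type*) [MulAction G X]
    (ι : Fin n → X) (hι : Function.Injective ι)
    (hcover : ∀ x : X, ∃ (g : G) (i : Fin n), x = g • ι i)
    (hinter : ∀ (g : G) (i : Fin n),
      Pi.single i (1 : K) ∈ S g ↔ ι i ∈ (g • ·) '' Set.range ι)
    (hrestr : ∀ (g : G) (i : Fin n), Pi.single i (1 : K) ∈ S (g⁻¹) →
      ∃ i' : Fin n, ι i' = g • ι i ∧ θ g (Pi.single i (1 : K)) = Pi.single i' (1 : K)) :
    IsEnvelopingAction K G (Fin n → K) (X →₀ K) S θ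
      (fun g f => Finsupp.equivMapDomain (MulAction.toPerm g) f)
      (fun v => ∑ i : Fin n, Finsupp.single (ι i) (v i)) :=
  statement16_general n S θ hpa X ι hι hcover hinter hrestr
end
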